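/- With Λ(t) the polarization-loss semigroup, ρ₁ = |H⟩⟨H|, ρ₂ = ½(|H⟩+|V⟩)(⟨H|+⟨V|), and pᵢ(t) = tr Λ(t)[ρᵢ], one has ‖p₁(t)Λ_D(t)[ρ₁] − p₂(t)Λ_D(t)[ρ₂]‖₁/(p₁(t)+p₂(t)) = √(1 − 8e^{−2γ_H t}/(3e^{−γ_H t} + e^{−γ_V t})²), where Λ_D(t)[ρᵢ] = Λ(t)[ρᵢ]/pᵢ(t). -/

import Mathlib

open Matrix
open scoped ComplexOrder

/-- The trace norm `‖A‖₁ = tr √(AᴴA)` of a complex square matrix. -/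
noncomputable def traceNorm {n : Type*} [Fintype n] [DecidableEq n]
    (A : Matrix n n ℂ) : ℝ :=
  (((Matrix.posSemidef_conjTranspose_mul_self A).1.eigenvectorUnitary.1 *
      diagonal (((↑) : ℝ → ℂ) ∘ Real.sqrt ∘ (Matrix.posSemidef_conjTranspose_mul_self A).1.eigenvalues) *
      (star (Matrix.posSemidef_conjTranspose_mul_self A).1.eigenvectorUnitary : Matrix n n ℂ)).trace).re

/-- The polarization-loss dynamics: entries damped by
`e^{-γ_H t}, e^{-(γ_H+γ_V)t/2}, e^{-γ_V t}`. -/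
noncomputable def lossMap (γH γV t : ℝ) (ρ : Matrix (Fin 2) (Fin 2) ℂ) :
    Matrix (Fin 2) (Fin 2) ℂ :=
  !![(Real.exp (-(γH * t)) : ℂ) * ρ 0 0,
     (Real.exp (-((γH + γV) * t / 2)) : ℂ) * ρ 0 1;
     (Real.exp (-((γH + γV) * t / 2)) : ℂ) * ρ 1 0,
     (Real.exp (-(γV * t)) : ℂ) * ρ 1 1]

/-!
For a `2 × 2` matrix `A` put `X = AᴴA` and `d = |det A|`. Cayley–Hamilton gives
`(X + d)² = (tr X + 2d) X`, so `√X = (X + d) / s` with `s = √(tr X + 2d)`, and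
`‖A‖₁ = tr √X = s`. The normalisations cancel:
`p₁Λ_D[ρ₁] − p₂Λ_D[ρ₂] = Λ[ρ₁] − Λ[ρ₂] = ½(a, −c; −c, −b)` with `a = e^{−γ_H t}`,
`b = e^{−γ_V t}`, `c = √(ab)`, a real symmetric matrix of trace norm `½√(a² + 6ab + b²)`,
while `p₁ + p₂ = (3a + b)/2`.
-/

open scoped MatrixOrder in
theorem traceNorm_eq_re_trace_of_sq_eq {n : Type*} [Fintype n] [DecidableEq n]
    {A B : Matrix n n ℂ} (hB : B.PosSemidef) (hBA : B ^ 2 = Aᴴ * A) :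
    traceNorm A = B.trace.re := by
  have hX := posSemidef_conjTranspose_mul_self A
  have hcfc := hX.1.cfc_eq Real.sqrt
  rw [IsHermitian.cfc, Unitary.conjStarAlgAut_apply] at hcfc
  have hsqrt : cfc Real.sqrt (Aᴴ * A) = B := by
    rw [← cfcₙ_eq_cfc, ← CFC.sqrt_eq_real_sqrt _ hX.nonneg, ← hBA, CFC.sqrt_sq B hB.nonneg]
  exact congrArg (fun M => M.trace.re) (hcfc.symm.trans hsqrt)

theorem sq_fin_two_eq_trace_smul_sub {R : Type*} [CommRing R] [Nontrivial R]
    (X : Matrix (Fin 2) (Fin 2) R) : X ^ 2 = X.trace • X - X.det • 1 := by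
  have h := X.aeval_self_charpoly
  rw [charpoly_fin_two, map_add, map_sub, map_mul, Polynomial.aeval_X_pow, Polynomial.aeval_X,
    Polynomial.aeval_C, Polynomial.aeval_C, Algebra.algebraMap_eq_smul_one,
    Algebra.algebraMap_eq_smul_one, smul_mul_assoc, one_mul] at h
  rw [← sub_eq_zero, ← h]
  abel

theorem det_conjTranspose_mul_self {n : Type*} [Fintype n] [DecidableEq n] (A : Matrix n n ℂ) :
    (Aᴴ * A).det = (‖A.det‖ ^ 2 : ℝ) := by
  rw [det_mul, det_conjTranspose, Complex.star_def, Complex.conj_mul', Complex.ofReal_pow]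

theorem conjTranspose_mul_self_add_norm_det_sq (A : Matrix (Fin 2) (Fin 2) ℂ) :
    (Aᴴ * A + (‖A.det‖ : ℂ) • 1) ^ 2 = ((Aᴴ * A).trace + 2 * ‖A.det‖) • (Aᴴ * A) := by
  rw [sq, add_mul, mul_add, mul_add, ← sq, sq_fin_two_eq_trace_smul_sub,
    det_conjTranspose_mul_self]
  simp only [smul_mul_assoc, mul_smul_comm, one_mul, mul_one, smul_smul]
  push_cast
  module

theorem traceNorm_fin_two (A : Matrix (Fin 2) (Fin 2) ℂ) :
    traceNorm A = √((Aᴴ * A).trace.re + 2 * ‖A.det‖) := by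
  set X := Aᴴ * A with hXdef
  set d := ‖A.det‖
  set s := √(X.trace.re + 2 * d)
  have hX : X.PosSemidef := posSemidef_conjTranspose_mul_self A
  have hd : 0 ≤ d := norm_nonneg _
  have htr_real : X.trace = X.trace.re :=
    Complex.eq_re_of_ofReal_le (r := 0) (by simpa using hX.trace_nonneg)
  have htr_nonneg : 0 ≤ X.trace.re := (Complex.nonneg_iff.1 hX.trace_nonneg).1
  have hs_sq : (s : ℂ) ^ 2 = X.trace + 2 * d := by
    rw [← Complex.ofReal_pow, Real.sq_sqrt (by positivity), htr_real]
    push_cast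
    rfl
  rw [traceNorm_eq_re_trace_of_sq_eq (B := (s⁻¹ : ℂ) • (X + (d : ℂ) • 1))]
  · rw [trace_smul, trace_add, trace_smul, trace_one, Fintype.card_fin, smul_eq_mul,
      show X.trace + (d : ℂ) • ((2 : ℕ) : ℂ) = (s : ℂ) ^ 2 by rw [hs_sq]; push_cast; ring,
      sq, ← mul_assoc, inv_mul_mul_self, Complex.ofReal_re]
  · have hs_inv : (0 : ℂ) ≤ (s⁻¹ : ℂ) := by
      exact_mod_cast Complex.zero_le_real.2 (inv_nonneg.2 (Real.sqrt_nonneg _))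
    exact (hX.add (PosSemidef.one.smul (Complex.zero_le_real.2 hd))).smul hs_inv
  · rw [smul_pow, conjTranspose_mul_self_add_norm_det_sq, ← hs_sq, smul_smul, ← mul_pow]
    rcases eq_or_ne (s : ℂ) 0 with hs | hs
    · have hX0 : X = 0 := by
        have hsum : X.trace.re + 2 * d = 0 := by
          simpa [hs, eq_comm] using congrArg Complex.re hs_sq
        rw [← hX.trace_eq_zero_iff, htr_real]
        exact_mod_cast (by linarith : X.trace.re = 0)
      simp [← hXdef, hX0]
    · rw [inv_mul_cancel₀ hs, one_pow, one_smul]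

theorem traceNorm_real_symm_fin_two_of_mul_le_sq (x y z : ℝ) (h : x * z ≤ y ^ 2) :
    traceNorm !![(x : ℂ), y; y, z] = √((x - z) ^ 2 + 4 * y ^ 2) := by
  have hdet : ‖(!![(x : ℂ), y; y, z]).det‖ = y ^ 2 - x * z := by
    rw [det_fin_two_of, ← Complex.ofReal_mul, ← Complex.ofReal_mul, ← Complex.ofReal_sub,
      Complex.norm_real, Real.norm_eq_abs, abs_sub_comm, abs_of_nonneg (by nlinarith)]
    ring
  have htr : (!![(x : ℂ), y; y, z]ᴴ * !![(x : ℂ), y; y, z]).trace.re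
      = x ^ 2 + 2 * y ^ 2 + z ^ 2 := by
    simp only [trace_fin_two, mul_apply, conjTranspose_apply, of_apply, cons_val', cons_val_zero,
      cons_val_fin_one, RCLike.star_def, Fin.sum_univ_two, Complex.conj_ofReal, cons_val_one,
      Complex.add_re, Complex.mul_re, Complex.ofReal_re, Complex.ofReal_im, mul_zero, sub_zero]
    ring
  rw [traceNorm_fin_two, hdet, htr]
  congr 1
  ring

section polarizations

variable (γH γV t : ℝ)

theorem trace_lossMap_H : (lossMap γH γV t !![1, 0; 0, 0]).trace = Real.exp (-(γH * t)) := by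
  simp [lossMap, trace_fin_two, -Complex.ofReal_exp]

theorem trace_lossMap_D : (lossMap γH γV t ((1 / 2 : ℂ) • !![1, 1; 1, 1])).trace
    = ((Real.exp (-(γH * t)) + Real.exp (-(γV * t))) / 2 : ℝ) := by
  simp only [lossMap, trace_fin_two, of_apply, cons_val', cons_val_zero, cons_val_fin_one,
    cons_val_one, Matrix.smul_apply, smul_eq_mul, mul_one, one_div, Complex.ofReal_div,
    Complex.ofReal_add, Complex.ofReal_ofNat]
  ring

theorem lossMap_H_sub_lossMap_D :
    lossMap γH γV t !![1, 0; 0, 0] - lossMap γH γV t ((1 / 2 : ℂ) • !![1, 1; 1, 1])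
      = !![((Real.exp (-(γH * t)) / 2 : ℝ) : ℂ),
            ((-Real.exp (-((γH + γV) * t / 2)) / 2 : ℝ) : ℂ);
           ((-Real.exp (-((γH + γV) * t / 2)) / 2 : ℝ) : ℂ),
            ((-Real.exp (-(γV * t)) / 2 : ℝ) : ℂ)] := by
  rw [eta_fin_two (lossMap γH γV t _ - _)]
  simp only [lossMap, Matrix.sub_apply, Matrix.smul_apply, of_apply, cons_val', cons_val_zero,
    cons_val_fin_one, cons_val_one, mul_one, mul_zero, smul_eq_mul, Complex.ofReal_div,
    Complex.ofReal_ofNat, Complex.ofReal_neg]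
  ring_nf

end polarizations

theorem stmt3_general (γH γV : ℝ) (t : ℝ)
    (ρ₁ ρ₂ : Matrix (Fin 2) (Fin 2) ℂ)
    (hρ₁ : ρ₁ = !![1, 0; 0, 0])
    (hρ₂ : ρ₂ = (1/2 : ℂ) • !![1, 1; 1, 1])
    (p₁ p₂ : ℂ) (hp₁ : p₁ = (lossMap γH γV t ρ₁).trace)
    (hp₂ : p₂ = (lossMap γH γV t ρ₂).trace)
    (ΛD₁ ΛD₂ : Matrix (Fin 2) (Fin 2) ℂ)
    (hΛD₁ : ΛD₁ = p₁⁻¹ • lossMap γH γV t ρ₁)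
    (hΛD₂ : ΛD₂ = p₂⁻¹ • lossMap γH γV t ρ₂) :
    traceNorm (p₁ • ΛD₁ - p₂ • ΛD₂) / (p₁.re + p₂.re)
      = Real.sqrt (1 - 8 * Real.exp (-(2 * γH * t)) /
          (3 * Real.exp (-(γH * t)) + Real.exp (-(γV * t))) ^ 2) := by
  subst hρ₁ hρ₂ hΛD₁ hΛD₂
  rw [trace_lossMap_H] at hp₁
  rw [trace_lossMap_D] at hp₂
  set a := Real.exp (-(γH * t))
  set b := Real.exp (-(γV * t))
  set c := Real.exp (-((γH + γV) * t / 2))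
  have hc : c ^ 2 = a * b := by
    rw [← Real.exp_nat_mul, ← Real.exp_add]; congr 1; push_cast; ring
  have ha2 : Real.exp (-(2 * γH * t)) = a ^ 2 := by
    rw [← Real.exp_nat_mul]; congr 1; push_cast; ring
  have hpos : 0 < 3 * a + b := by positivity
  rw [smul_inv_smul₀ (by rw [hp₁]; positivity), smul_inv_smul₀ (by rw [hp₂]; positivity),
    lossMap_H_sub_lossMap_D, traceNorm_real_symm_fin_two_of_mul_le_sq _ _ _ (by nlinarith),
    hp₁, hp₂, Complex.ofReal_re, Complex.ofReal_re, ha2]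
  calc √((a / 2 - -b / 2) ^ 2 + 4 * (-c / 2) ^ 2) / (a + (a + b) / 2)
      = √((a ^ 2 + 6 * a * b + b ^ 2) / 2 ^ 2) / ((3 * a + b) / 2) := by
        congr 2
        · linear_combination hc
        · ring
    _ = √((a ^ 2 + 6 * a * b + b ^ 2) / (3 * a + b) ^ 2) := by
        rw [Real.sqrt_div' _ (sq_nonneg _), Real.sqrt_div' _ (sq_nonneg _), Real.sqrt_sq hpos.le,
          Real.sqrt_sq zero_le_two, div_div_div_cancel_right₀ two_ne_zero]
    _ = √(1 - 8 * a ^ 2 / (3 * a + b) ^ 2) := by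
        congr 1
        rw [eq_sub_iff_add_eq, ← add_div, div_eq_one_iff_eq (pow_ne_zero 2 hpos.ne')]
        ring

/-- For `ρ₁ = |H⟩⟨H|`, `ρ₂ = ½(|H⟩+|V⟩)(⟨H|+⟨V|)`, with `pᵢ(t) = tr Λ(t)[ρᵢ]` and
`Λ_D(t)[ρᵢ] = Λ(t)[ρᵢ]/pᵢ(t)`, one has
`‖p₁(t)Λ_D(t)[ρ₁] − p₂(t)Λ_D(t)[ρ₂]‖₁/(p₁(t)+p₂(t))
  = √(1 − 8e^{−2γ_H t}/(3e^{−γ_H t} + e^{−γ_V t})²)`. -/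
theorem stmt3 (γH γV : ℝ) (hH : 0 ≤ γH) (hV : 0 ≤ γV) (t : ℝ) (ht : 0 ≤ t)
    (ρ₁ ρ₂ : Matrix (Fin 2) (Fin 2) ℂ)
    (hρ₁ : ρ₁ = !![1, 0; 0, 0])
    (hρ₂ : ρ₂ = (1/2 : ℂ) • !![1, 1; 1, 1])
    (p₁ p₂ : ℂ) (hp₁ : p₁ = (lossMap γH γV t ρ₁).trace)
    (hp₂ : p₂ = (lossMap γH γV t ρ₂).trace)
    (ΛD₁ ΛD₂ : Matrix (Fin 2) (Fin 2) ℂ)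
    (hΛD₁ : ΛD₁ = p₁⁻¹ • lossMap γH γV t ρ₁)
    (hΛD₂ : ΛD₂ = p₂⁻¹ • lossMap γH γV t ρ₂) :
    traceNorm (p₁ • ΛD₁ - p₂ • ΛD₂) / (p₁.re + p₂.re)
      = Real.sqrt (1 - 8 * Real.exp (-(2 * γH * t)) /
          (3 * Real.exp (-(γH * t)) + Real.exp (-(γV * t))) ^ 2) :=
  stmt3_general γH γV t ρ₁ ρ₂ hρ₁ hρ₂ p₁ p₂ hp₁ hp₂ ΛD₁ ΛD₂ hΛD₁ hΛD₂
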